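/- arXiv:1801.03663 — 2 statements merged into one kernel-verified Lean document; each statement's English description precedes it below -/
import Mathlib

section
/- Core claim of Proposition 4.4 (all sampled constraints are support constraints): let K ≥ 1 and let (a_k, b_k), k = 1,…,K, be an admissible family of samples. Let μ* be the infimum of h₂ over the full feasible set F := {(h₁, h₂) ∈ ℝ² : 0 ≤ h₁ ≤ 1 and η (h₁, h₂) (a_k, b_k) ≤ 0 for all k = 1,…,K}. Then for every j ∈ {1,…,K} there exists a point (h₁, h₂) with 0 ≤ h₁ ≤ 1, η (h₁, h₂) (a_k, b_k) ≤ 0 for all k ≠ j, and h₂ < μ*. That is, removing any single sampled constraint strictly improves the optimal cost, so every sampled constraint is a support constraint of the scenario program. -/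
/-- The counterexample constraint function from the proof of Proposition 4.4. -/
noncomputable def eta (h w : ℝ × ℝ) : ℝ :=
  if h.1 ≤ w.1 + w.2 then h.1 - w.1 - h.2 else w.1 + 2 * w.2 - h.1 - h.2

lemma eta_le_zero_iff (h w : ℝ × ℝ) :
    eta h w ≤ 0 ↔ w.2 - |h.1 - (w.1 + w.2)| ≤ h.2 := by
  unfold eta
  rcases le_or_gt h.1 (w.1 + w.2) with hc | hc
  · rw [if_pos hc, abs_of_nonpos (by linarith)]
    constructor <;> intro <;> linarith
  · rw [if_neg (not_le.mpr hc), abs_of_pos (by linarith)]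
    constructor <;> intro <;> linarith

set_option maxHeartbeats 2000000 in
theorem all_constraints_are_support_constraints
    (K : ℕ) (hK : 1 ≤ K) (a b : Fin K → ℝ)
    (ha : ∀ k : Fin K,
      (4 * ((k : ℕ) + 1 : ℝ) - 5) / (4 * K) - 1 / (16 * K) < a k ∧
      a k < (4 * ((k : ℕ) + 1 : ℝ) - 5) / (4 * K) + 1 / (16 * K))
    (hb : ∀ k : Fin K, (1 : ℝ) / K < b k ∧ b k < 1 / K + 1 / (8 * K)) :
    ∀ j : Fin K, ∃ h : ℝ × ℝ,
      0 ≤ h.1 ∧ h.1 ≤ 1 ∧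
      (∀ k : Fin K, k ≠ j → eta h (a k, b k) ≤ 0) ∧
      h.2 < sInf ((fun p : ℝ × ℝ => p.2) ''
        {p : ℝ × ℝ | 0 ≤ p.1 ∧ p.1 ≤ 1 ∧ ∀ k : Fin K, eta p (a k, b k) ≤ 0}) := by
  have hK0 : (0 : ℝ) < K := by exact_mod_cast Nat.lt_of_lt_of_le Nat.zero_lt_one hK
  have hK0' : (K : ℝ) ≠ 0 := ne_of_gt hK0
  have hK1 : (1 : ℝ) ≤ K := by exact_mod_cast hK
  set u : ℝ := 1 / (16 * (K : ℝ)) with hu_def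
  have hu : 0 < u := by rw [hu_def]; positivity
  have huK : u * K = 1 / 16 := by rw [hu_def]; field_simp
  have hu16 : u ≤ 1 / 16 := by
    rw [hu_def]
    rw [div_le_div_iff₀ (by linarith) (by norm_num)]
    linarith
  have key : ∀ x : ℝ, (4 * (x + 1) - 5) / (4 * (K : ℝ)) = 16 * u * x - 4 * u := by
    intro x; rw [hu_def]; field_simp; ring
  have ha' : ∀ k : Fin K,
      16 * u * ((k : ℕ) : ℝ) - 5 * u < a k ∧ a k < 16 * u * ((k : ℕ) : ℝ) - 3 * u := by
    intro k
    obtain ⟨h1, h2⟩ := ha k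
    rw [key (((k : ℕ) : ℝ))] at h1 h2
    constructor <;> linarith
  have hb' : ∀ k : Fin K, 16 * u < b k ∧ b k < 18 * u := by
    intro k
    obtain ⟨h1, h2⟩ := hb k
    have e1 : (1 : ℝ) / K = 16 * u := by rw [hu_def]; field_simp
    have e2 : (1 : ℝ) / (8 * K) = 2 * u := by rw [hu_def]; field_simp; ring
    rw [e1] at h1 h2
    rw [e2] at h2
    constructor <;> linarith
  set S : Set ℝ := (fun p : ℝ × ℝ => p.2) ''
      {p : ℝ × ℝ | 0 ≤ p.1 ∧ p.1 ≤ 1 ∧ ∀ k : Fin K, eta p (a k, b k) ≤ 0} with hS_def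
  have i0 : Fin K := ⟨0, hK⟩
  -- the full feasible set is nonempty
  have hne : S.Nonempty := by
    refine ⟨2, ⟨(0, 2), ⟨le_refl _, by norm_num, ?_⟩, rfl⟩⟩
    intro k
    rw [eta_le_zero_iff]
    simp only
    have h1 := (hb' k).2
    have h2 := abs_nonneg ((0 : ℝ) - (a k + b k))
    linarith
  -- lower bound for the infimum
  have hlb : ∀ y ∈ S, -(a ⟨0, hK⟩) ≤ y := by
    rintro y ⟨p, ⟨hp0, hp1, hpk⟩, rfl⟩
    simp only
    have ha0 := ha' ⟨0, hK⟩
    have hb0 := hb' ⟨0, hK⟩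
    simp only [Fin.val_mk, Nat.cast_zero, mul_zero] at ha0 hb0
    rcases le_or_gt p.1 (a ⟨0, hK⟩ + b ⟨0, hK⟩) with hc | hc
    · have h1 := (eta_le_zero_iff p (a ⟨0, hK⟩, b ⟨0, hK⟩)).mp (hpk ⟨0, hK⟩)
      simp only at h1
      rw [abs_of_nonpos (by linarith)] at h1
      linarith
    · -- p.1 > c_0 ≥ 11u, pick the nearest tent
      have hp11 : 11 * u < p.1 := by linarith
      set m : ℤ := ⌊p.1 * K - 1/4⌋ with hm_def
      have hm0 : 0 ≤ m := by
        rw [hm_def]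
        apply Int.le_floor.mpr
        push_cast
        nlinarith [mul_lt_mul_of_pos_right hp11 hK0]
      have hmK : m < K := by
        rw [hm_def]
        apply Int.floor_lt.mpr
        push_cast
        nlinarith [mul_le_mul_of_nonneg_right hp1 (le_of_lt hK0)]
      set n : ℕ := m.toNat with hn_def
      have hnm : (n : ℤ) = m := Int.toNat_of_nonneg hm0
      have hnK : n < K := by omega
      set kk : Fin K := ⟨n, hnK⟩ with hkk_def
      have hnr : ((kk : ℕ) : ℝ) = (m : ℝ) := by
        simp only [hkk_def, Fin.val_mk]
        exact_mod_cast congrArg (fun z : ℤ => (z : ℝ)) hnm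
      have hf1 : (m : ℝ) ≤ p.1 * K - 1/4 := Int.floor_le _
      have hf2 : p.1 * K - 1/4 < (m : ℝ) + 1 := Int.lt_floor_add_one _
      have h5 : ((m : ℝ) + 1/4) / K ≤ p.1 := by
        rw [div_le_iff₀ hK0]; linarith
      have h6 : p.1 < ((m : ℝ) + 5/4) / K := by
        rw [lt_div_iff₀ hK0]; linarith
      have hdiv : ∀ x : ℝ, x / K = 16 * u * x := by
        intro x; rw [hu_def]; field_simp
      rw [hdiv] at h5 h6
      have hak := ha' kk
      have hbk := hb' kk
      rw [hnr] at hak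
      have hcon := (eta_le_zero_iff p (a kk, b kk)).mp (hpk kk)
      simp only at hcon
      have habs : |p.1 - (a kk + b kk)| < 11 * u := by
        rw [abs_lt]
        constructor <;> nlinarith
      linarith
  have hInf : 3 * u < sInf S := by
    have h1 : -(a ⟨0, hK⟩) ≤ sInf S := le_csInf hne hlb
    have ha0 := (ha' ⟨0, hK⟩).2
    simp only [Fin.val_mk, Nat.cast_zero, mul_zero] at ha0
    linarith
  intro j
  by_cases hj0 : (j : ℕ) = 0
  · -- remove the first constraint: take (0, 0)
    refine ⟨(0, 0), le_refl _, by norm_num, ?_, ?_⟩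
    · intro k hk
      rw [eta_le_zero_iff]
      simp only
      have hk1 : 1 ≤ (k : ℕ) := by
        rcases Nat.eq_zero_or_pos (k : ℕ) with h | h
        · exact absurd (Fin.ext (h.trans hj0.symm)) hk
        · exact h
      have hk1r : (1 : ℝ) ≤ ((k : ℕ) : ℝ) := by exact_mod_cast hk1
      have hmul : u * 1 ≤ u * ((k : ℕ) : ℝ) :=
        mul_le_mul_of_nonneg_left hk1r (le_of_lt hu)
      have hak := (ha' k).1
      have hbk := (hb' k).1
      have hcpos : 0 < a k + b k := by nlinarith
      rw [abs_of_nonpos (by linarith)]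
      linarith
    · simp only
      linarith
  · -- remove constraint j ≥ 2 (index j ≥ 1): take the valley left of tent j
    have hj1 : 1 ≤ (j : ℕ) := Nat.one_le_iff_ne_zero.mpr hj0
    have hiK : (j : ℕ) - 1 < K := by omega
    set i : Fin K := ⟨(j : ℕ) - 1, hiK⟩ with hi_def
    have hiv : ((i : ℕ) : ℝ) = ((j : ℕ) : ℝ) - 1 := by
      simp only [hi_def, Fin.val_mk]
      have : ((j : ℕ) - 1 : ℕ) = (j : ℕ) - 1 := rfl
      push_cast [Nat.cast_sub hj1]
      ring
    have hai := ha' i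
    have hbi := hb' i
    refine ⟨(a i + 2 * b i - 3 * u, 3 * u), ?_, ?_, ?_, ?_⟩
    · simp only
      have hmul : 0 ≤ u * ((i : ℕ) : ℝ) :=
        mul_nonneg (le_of_lt hu) (Nat.cast_nonneg _)
      nlinarith [hai.1, hbi.1]
    · simp only
      have hival : (i : ℕ) = (j : ℕ) - 1 := rfl
      have hik : (i : ℕ) + 2 ≤ K := by omega
      have hikr : ((i : ℕ) : ℝ) ≤ (K : ℝ) - 2 := by
        have : (((i : ℕ) : ℝ) + 2) ≤ (K : ℝ) := by exact_mod_cast hik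
        linarith
      have hmul : u * ((i : ℕ) : ℝ) ≤ u * ((K : ℝ) - 2) :=
        mul_le_mul_of_nonneg_left hikr (le_of_lt hu)
      nlinarith [hai.2, hbi.2]
    · intro k hk
      rw [eta_le_zero_iff]
      simp only
      have hak := ha' k
      have hbk := hb' k
      rcases lt_trichotomy (k : ℕ) (j : ℕ) with hlt | heq | hgt
      · -- k left of j
        rcases Nat.lt_or_ge (k : ℕ) ((j : ℕ) - 1) with hlt' | hge'
        · -- k strictly left of i
          have hkir : ((k : ℕ) : ℝ) + 1 ≤ ((i : ℕ) : ℝ) := by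
            have : (k : ℕ) + 1 ≤ (i : ℕ) := by simp only [hi_def, Fin.val_mk]; omega
            exact_mod_cast this
          have hmul : u * (((k : ℕ) : ℝ) + 1) ≤ u * ((i : ℕ) : ℝ) :=
            mul_le_mul_of_nonneg_left hkir (le_of_lt hu)
          have h1 : a k + b k + (b k - 3 * u) ≤ a i + 2 * b i - 3 * u := by nlinarith
          have h2 := le_abs_self (a i + 2 * b i - 3 * u - (a k + b k))
          linarith
        · -- k = i
          have hki : k = i := by
            apply Fin.ext
            simp only [hi_def, Fin.val_mk]
            omega
          rw [hki]
          rw [show a i + 2 * b i - 3 * u - (a i + b i) = b i - 3 * u by ring,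
            abs_of_nonneg (by linarith [hbi.1])]
          linarith
      · exact absurd (Fin.ext heq) hk
      · -- k right of j, so (k:ℕ) ≥ (i:ℕ) + 2
        have hkir : ((i : ℕ) : ℝ) + 2 ≤ ((k : ℕ) : ℝ) := by
          have : (i : ℕ) + 2 ≤ (k : ℕ) := by simp only [hi_def, Fin.val_mk]; omega
          exact_mod_cast this
        have hmul : u * (((i : ℕ) : ℝ) + 2) ≤ u * ((k : ℕ) : ℝ) :=
          mul_le_mul_of_nonneg_left hkir (le_of_lt hu)
        have h1 : b k - 3 * u ≤ a k + b k - (a i + 2 * b i - 3 * u) := by nlinarith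
        have h2 := neg_le_abs (a i + 2 * b i - 3 * u - (a k + b k))
        linarith
    · simp only
      exact hInf
end

section
/- Sample-size bound for the binomial tail used in the proof of Theorem 4.6: let ε ∈ (0,1), β ∈ (0,1), and let M ≥ 1 and d ≥ 1 be integers. If K is an integer with K ≥ (e/(e−1))·(1/ε)·(ln(M/β) + d − 1), where e is Euler's number, then M · ∑_{i=0}^{d−1} (K choose i) · ε^i · (1−ε)^{K−i} ≤ β. -/
open Real

theorem scenario_sample_size_bound
    (ε β : ℝ) (hε : ε ∈ Set.Ioo (0 : ℝ) 1) (hβ : β ∈ Set.Ioo (0 : ℝ) 1)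
    (M d K : ℕ) (hM : 1 ≤ M) (hd : 1 ≤ d)
    (hK : (Real.exp 1 / (Real.exp 1 - 1)) * (1 / ε) *
        (Real.log ((M : ℝ) / β) + (d : ℝ) - 1) ≤ (K : ℝ)) :
    (M : ℝ) * ∑ i ∈ Finset.range d,
        (K.choose i : ℝ) * ε ^ i * (1 - ε) ^ (K - i) ≤ β := by
  obtain ⟨hε0, hε1⟩ := hε
  obtain ⟨hβ0, hβ1⟩ := hβ
  have he1 : (1:ℝ) < Real.exp 1 := by
    have := Real.exp_one_gt_d9; linarith
  set x : ℝ := ε * Real.exp (-1) with hx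
  have hx0 : 0 ≤ x := by positivity
  have hy0 : (0:ℝ) ≤ 1 - ε := by linarith
  set c : ℝ := ε * (1 - Real.exp (-1)) with hc
  have hEinv : Real.exp (-1) = (Real.exp 1)⁻¹ := by
    rw [← Real.exp_neg]
  have hEinv1 : Real.exp (-1) < 1 := by
    rw [hEinv]
    exact inv_lt_one_of_one_lt₀ he1
  have hc0 : 0 < c := by
    have h1 : 0 < 1 - Real.exp (-1) := by linarith
    positivity
  -- Step 1: multiply each term by exp(d-1-i) ≥ 1
  have step1 : ∑ i ∈ Finset.range d, (K.choose i : ℝ) * ε ^ i * (1 - ε) ^ (K - i)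
      ≤ Real.exp ((d:ℝ) - 1) *
        ∑ i ∈ Finset.range d, (K.choose i : ℝ) * x ^ i * (1 - ε) ^ (K - i) := by
    rw [Finset.mul_sum]
    apply Finset.sum_le_sum
    intro i hi
    have hi' : (i:ℝ) ≤ (d:ℝ) - 1 := by
      have h := Finset.mem_range.mp hi
      have h2 : (i:ℝ) + 1 ≤ (d:ℝ) := by exact_mod_cast h
      linarith
    have key : (1:ℝ) ≤ Real.exp ((d:ℝ) - 1) * Real.exp (-1) ^ i := by
      rw [← Real.exp_nat_mul, ← Real.exp_add]
      apply Real.one_le_exp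
      push_cast
      linarith
    have hterm : (0:ℝ) ≤ (K.choose i : ℝ) * ε ^ i * (1 - ε) ^ (K - i) := by positivity
    calc (K.choose i : ℝ) * ε ^ i * (1 - ε) ^ (K - i)
        = 1 * ((K.choose i : ℝ) * ε ^ i * (1 - ε) ^ (K - i)) := by ring
      _ ≤ (Real.exp ((d:ℝ) - 1) * Real.exp (-1) ^ i) *
            ((K.choose i : ℝ) * ε ^ i * (1 - ε) ^ (K - i)) :=
          mul_le_mul_of_nonneg_right key hterm
      _ = Real.exp ((d:ℝ) - 1) * ((K.choose i : ℝ) * x ^ i * (1 - ε) ^ (K - i)) := by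
          rw [hx, mul_pow]; ring
  -- Step 2: complete the binomial sum
  have step2 : ∑ i ∈ Finset.range d, (K.choose i : ℝ) * x ^ i * (1 - ε) ^ (K - i)
      ≤ (x + (1 - ε)) ^ K := by
    have hext : ∑ i ∈ Finset.range d, (K.choose i : ℝ) * x ^ i * (1 - ε) ^ (K - i)
        ≤ ∑ i ∈ Finset.range (max d (K+1)), (K.choose i : ℝ) * x ^ i * (1 - ε) ^ (K - i) := by
      apply Finset.sum_le_sum_of_subset_of_nonneg
      · exact Finset.range_subset_range.mpr (le_max_left _ _)
      · intro i _ _; positivity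
    have heq : ∑ i ∈ Finset.range (max d (K+1)), (K.choose i : ℝ) * x ^ i * (1 - ε) ^ (K - i)
        = ∑ i ∈ Finset.range (K+1), (K.choose i : ℝ) * x ^ i * (1 - ε) ^ (K - i) := by
      symm
      apply Finset.sum_subset (Finset.range_subset_range.mpr (le_max_right _ _))
      intro i _ hi2
      have hKi : K < i := by
        simp only [Finset.mem_range, not_lt] at hi2
        omega
      rw [Nat.choose_eq_zero_of_lt hKi]
      simp
    have hap : (x + (1 - ε)) ^ K
        = ∑ i ∈ Finset.range (K+1), x ^ i * (1 - ε) ^ (K - i) * (K.choose i : ℝ) :=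
      add_pow x (1 - ε) K
    calc ∑ i ∈ Finset.range d, (K.choose i : ℝ) * x ^ i * (1 - ε) ^ (K - i)
        ≤ ∑ i ∈ Finset.range (max d (K+1)), (K.choose i : ℝ) * x ^ i * (1 - ε) ^ (K - i) := hext
      _ = ∑ i ∈ Finset.range (K+1), (K.choose i : ℝ) * x ^ i * (1 - ε) ^ (K - i) := heq
      _ = (x + (1 - ε)) ^ K := by
          rw [hap]; apply Finset.sum_congr rfl; intros; ring
  -- Step 3: bound the binomial base by an exponential
  have step3 : (x + (1 - ε)) ^ K ≤ Real.exp ((K:ℝ) * (-c)) := by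
    have hbase : x + (1 - ε) ≤ Real.exp (-c) := by
      have h1 : -c + 1 ≤ Real.exp (-c) := Real.add_one_le_exp (-c)
      have h2 : x + (1 - ε) = -c + 1 := by rw [hx, hc]; ring
      linarith
    have hbase0 : 0 ≤ x + (1 - ε) := by linarith
    calc (x + (1 - ε)) ^ K ≤ (Real.exp (-c)) ^ K := pow_le_pow_left₀ hbase0 hbase K
      _ = Real.exp ((K:ℝ) * (-c)) := (Real.exp_nat_mul (-c) K).symm
  -- Arithmetic from hK
  have hMpos : (0:ℝ) < (M:ℝ) := by exact_mod_cast Nat.lt_of_lt_of_le Nat.zero_lt_one hM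
  have hL : Real.log ((M:ℝ)/β) + (d:ℝ) - 1 ≤ c * K := by
    set L : ℝ := Real.log ((M:ℝ)/β) + (d:ℝ) - 1 with hLdef
    have hE0 : Real.exp 1 ≠ 0 := (Real.exp_pos 1).ne'
    have hE1 : Real.exp 1 - 1 ≠ 0 := by linarith
    have hεne : ε ≠ 0 := hε0.ne'
    have hfac : c * ((Real.exp 1 / (Real.exp 1 - 1)) * (1/ε)) = 1 := by
      rw [hc, hEinv]
      field_simp
    have h2 : c * ((Real.exp 1 / (Real.exp 1 - 1)) * (1/ε) * L) = L := by
      have : c * ((Real.exp 1 / (Real.exp 1 - 1)) * (1/ε) * L)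
          = (c * ((Real.exp 1 / (Real.exp 1 - 1)) * (1/ε))) * L := by ring
      rw [this, hfac, one_mul]
    have h3 := mul_le_mul_of_nonneg_left hK hc0.le
    rw [h2] at h3
    exact h3
  -- Final conclusion
  have hlogM : Real.log ((M:ℝ)/β) = Real.log (M:ℝ) - Real.log β :=
    Real.log_div hMpos.ne' hβ0.ne'
  have hfin : (M:ℝ) * (Real.exp ((d:ℝ) - 1) * Real.exp ((K:ℝ) * (-c))) ≤ β := by
    rw [← Real.exp_add]
    have hs : ((d:ℝ) - 1) + (K:ℝ) * (-c) ≤ Real.log β - Real.log (M:ℝ) := by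
      rw [hlogM] at hL
      linarith
    have hexp : Real.exp (((d:ℝ) - 1) + (K:ℝ) * (-c)) ≤ β / (M:ℝ) := by
      have : β / (M:ℝ) = Real.exp (Real.log (β / (M:ℝ))) := by
        rw [Real.exp_log (by positivity)]
      rw [this]
      apply Real.exp_le_exp.mpr
      rw [Real.log_div hβ0.ne' hMpos.ne']
      linarith
    calc (M:ℝ) * Real.exp (((d:ℝ) - 1) + (K:ℝ) * (-c))
        ≤ (M:ℝ) * (β / (M:ℝ)) := mul_le_mul_of_nonneg_left hexp hMpos.le
      _ = β := by field_simp
  -- chain everything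
  have hS0 : 0 ≤ Real.exp ((d:ℝ) - 1) := (Real.exp_pos _).le
  calc (M : ℝ) * ∑ i ∈ Finset.range d, (K.choose i : ℝ) * ε ^ i * (1 - ε) ^ (K - i)
      ≤ (M:ℝ) * (Real.exp ((d:ℝ) - 1) *
          ∑ i ∈ Finset.range d, (K.choose i : ℝ) * x ^ i * (1 - ε) ^ (K - i)) :=
        mul_le_mul_of_nonneg_left step1 hMpos.le
    _ ≤ (M:ℝ) * (Real.exp ((d:ℝ) - 1) * (x + (1 - ε)) ^ K) := by
        apply mul_le_mul_of_nonneg_left _ hMpos.le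
        exact mul_le_mul_of_nonneg_left step2 hS0
    _ ≤ (M:ℝ) * (Real.exp ((d:ℝ) - 1) * Real.exp ((K:ℝ) * (-c))) := by
        apply mul_le_mul_of_nonneg_left _ hMpos.le
        exact mul_le_mul_of_nonneg_left step3 hS0
    _ ≤ β := hfin
end
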